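/- arXiv:2603.01020 — 3 statements merged into one kernel-verified Lean document; each statement's English description precedes it below -/
import Mathlib

section
/- Let G be a finite simple graph with n vertices and average degree Γ = 2|E(G)|/n. Then the number of acyclic orientations of G is at most (Γ + 1)^n; equivalently, if D is an orientation of G chosen uniformly at random (each edge directed independently with probability 1/2 in each direction), then the probability that D is acyclic is at most ((Γ + 1)/2^(Γ/2))^n. -/
/-- A digraph (given as a relation) is acyclic if it has no directed closed walk. -/
def DiAcyclic {V : Type*} (D : V → V → Prop) : Prop :=
  ∀ v, ¬ Relation.TransGen D v v

/-- A colouring is a dicolouring if every colour class induces an acyclic subdigraph. -/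
def IsDicolouring {V α : Type*} (D : V → V → Prop) (φ : V → α) : Prop :=
  ∀ c : α, DiAcyclic (fun x y => D x y ∧ φ x = c ∧ φ y = c)

/-- `D` is an orientation of the simple graph `G`: every arc of `D` is an edge of `G`,
and every edge of `G` carries exactly one of its two possible arcs. -/
def IsOrientationOf {V : Type*} (D : V → V → Prop) (G : SimpleGraph V) : Prop :=
  (∀ u v, D u v → G.Adj u v) ∧ ∀ u v, G.Adj u v → (D u v ↔ ¬ D v u)

/-- The dichoosability (list dichromatic number) of a digraph: the least `k` such that
for every list assignment giving each vertex at least `k` positive integers, there is a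
dicolouring choosing a colour from each list. -/
noncomputable def dichoos {V : Type*} (D : V → V → Prop) : ℕ :=
  sInf {k | ∀ L : V → Finset ℕ+, (∀ v, k ≤ (L v).card) →
    ∃ φ : V → ℕ+, (∀ v, φ v ∈ L v) ∧ IsDicolouring D φ}

/-!
An acyclic orientation is determined by its out-degree sequence: if two orientations `D₁`, `D₂`
of `G` have the same out-degrees, the arcs of `D₁` that `D₂` reverses have in-degree equal to
out-degree at every vertex, so if there are any they contain a directed cycle, impossible in
an acyclic `D₁`. Out-degrees range over `{0, …, deg v}`, so there are at most `∏ (deg v + 1)`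
acyclic orientations, and AM-GM bounds this product by `(Γ + 1)^n`.
-/

open Finset

variable {V : Type*}

lemma DiAcyclic.mono {D D' : V → V → Prop} (h : DiAcyclic D) (hD : ∀ u v, D' u v → D u v) :
    DiAcyclic D' :=
  fun v hv => h v (Relation.TransGen.mono hD v v hv)

lemma not_diAcyclic_of_forall_exists_succ [Finite V] {S : V → V → Prop}
    (hsucc : ∀ u v, S u v → ∃ w, S v w) {u v : V} (huv : S u v) : ¬ DiAcyclic S := by
  intro hS
  -- Acyclicity makes the reversed transitive closure a strict order, well-founded since `V` is
  -- finite; a minimal vertex with an in-arc then has no out-arc.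
  let r : V → V → Prop := fun x y => Relation.TransGen S y x
  have : IsTrans V r := ⟨fun _ _ _ hxy hyz => hyz.trans hxy⟩
  have : Std.Irrefl r := ⟨hS⟩
  obtain ⟨x, ⟨t, htx⟩, hmin⟩ :=
    (Finite.wellFounded_of_trans_of_irrefl r).has_min {x | ∃ t, S t x} ⟨v, u, huv⟩
  obtain ⟨w, hxw⟩ := hsucc t x htx
  exact hmin w ⟨x, hxw⟩ (.single hxw)

lemma not_diAcyclic_of_card_out_eq_card_in [Fintype V] {S : V → V → Prop} [DecidableRel S]
    (hbal : ∀ v, #{w | S v w} = #{w | S w v}) {u v : V} (huv : S u v) : ¬ DiAcyclic S := by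
  refine not_diAcyclic_of_forall_exists_succ (fun u v huv => ?_) huv
  obtain ⟨w, hw⟩ := card_pos.1 (hbal v ▸ card_pos.2 ⟨u, by simpa using huv⟩ : 0 < #{w | S v w})
  exact ⟨w, (mem_filter.1 hw).2⟩

namespace IsOrientationOf

variable {G : SimpleGraph V}

lemma swap_iff_not {D : V → V → Prop} (hD : IsOrientationOf D G) {u v : V} (huv : G.Adj u v) :
    D v u ↔ ¬ D u v := by
  have := hD.2 u v huv
  tauto

lemma eq_of_card_out_eq [Fintype V] {D₁ D₂ : V → V → Prop} [DecidableRel D₁] [DecidableRel D₂]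
    (h₁ : IsOrientationOf D₁ G) (h₂ : IsOrientationOf D₂ G) (hac : DiAcyclic D₁)
    (hout : ∀ v, #{w | D₁ v w} = #{w | D₂ v w}) : D₁ = D₂ := by
  set S : V → V → Prop := fun x y => D₁ x y ∧ D₂ y x
  have hS_out : ∀ v w, S v w ↔ D₁ v w ∧ ¬ D₂ v w := fun v w =>
    and_congr_right fun h => h₂.swap_iff_not (h₁.1 v w h)
  have hS_in : ∀ v w, S w v ↔ D₂ v w ∧ ¬ D₁ v w := fun v w =>
    and_comm.trans <| and_congr_right fun h => h₁.swap_iff_not (h₂.1 v w h)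
  have hbal : ∀ v, #{w | S v w} = #{w | S w v} := by
    classical
    intro v
    calc #{w | S v w} = #{w | D₁ v w ∧ ¬ D₂ v w} := by rw [filter_congr fun w _ => hS_out v w]
      _ = #{w | D₂ v w ∧ ¬ D₁ v w} := by
        rw [filter_and_not, filter_and_not]
        exact card_sdiff_comm (hout v)
      _ = #{w | S w v} := by rw [filter_congr fun w _ => hS_in v w]
  by_contra hne
  obtain ⟨u, v, huv⟩ : ∃ u v, ¬ (D₁ u v ↔ D₂ u v) := by
    by_contra! h
    exact hne (funext₂ fun u v => propext (h u v))
  by_cases hD₁ : D₁ u v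
  · exact not_diAcyclic_of_card_out_eq_card_in hbal ((hS_out u v).2 ⟨hD₁, by tauto⟩)
      (hac.mono fun _ _ h => h.1)
  · exact not_diAcyclic_of_card_out_eq_card_in hbal ((hS_in u v).2 ⟨by tauto, hD₁⟩)
      (hac.mono fun _ _ h => h.1)

end IsOrientationOf

theorem card_acyclic_orientations_le_prod [Fintype V] (G : SimpleGraph V) [DecidableRel G.Adj] :
    Nat.card {D : V → V → Prop // IsOrientationOf D G ∧ DiAcyclic D} ≤
      ∏ v, (G.degree v + 1) := by
  classical
  let outdeg : {D : V → V → Prop // IsOrientationOf D G ∧ DiAcyclic D} →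
      ∀ v, Fin (G.degree v + 1) := fun D v =>
    ⟨#{w | D.1 v w}, Nat.lt_succ_of_le <| card_le_card fun w hw => by
      simpa using D.2.1.1 v w (mem_filter.1 hw).2⟩
  have houtdeg : Function.Injective outdeg := fun D₁ D₂ h =>
    Subtype.ext <| D₁.2.1.eq_of_card_out_eq D₂.2.1 D₁.2.2 fun v => congrArg Fin.val (congrFun h v)
  simpa [Nat.card_pi] using Nat.card_le_card_of_injective outdeg houtdeg

theorem Real.prod_le_pow_card_of_sum_le {ι : Type*} (s : Finset ι) (z : ι → ℝ) (a : ℝ)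
    (hz : ∀ i ∈ s, 0 ≤ z i) (hsum : ∑ i ∈ s, z i ≤ #s * a) : ∏ i ∈ s, z i ≤ a ^ #s := by
  rcases s.eq_empty_or_nonempty with rfl | hs
  · simp
  have hn : (#s : ℝ) ≠ 0 := by positivity
  have hamgm := Real.geom_mean_le_arith_mean_weighted s (fun _ => (#s : ℝ)⁻¹) z
    (fun _ _ => by positivity) (by simp [hn]) hz
  rw [← mul_sum] at hamgm
  have hmean : ∏ i ∈ s, z i ^ (#s : ℝ)⁻¹ ≤ a :=
    hamgm.trans <| (inv_mul_le_iff₀ (by positivity)).2 hsum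
  calc ∏ i ∈ s, z i = (∏ i ∈ s, z i ^ (#s : ℝ)⁻¹) ^ #s := by
        rw [← prod_pow]
        exact prod_congr rfl fun i hi => (Real.rpow_inv_natCast_pow (hz i hi) hs.card_ne_zero).symm
    _ ≤ a ^ #s := pow_le_pow_left₀ (prod_nonneg fun i hi => Real.rpow_nonneg (hz i hi) _) hmean _

lemma SimpleGraph.two_mul_ncard_edgeSet_div_card_mul_card [Fintype V] (G : SimpleGraph V) :
    (2 * G.edgeSet.ncard / Fintype.card V : ℝ) * Fintype.card V = 2 * G.edgeSet.ncard := by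
  rcases (Fintype.card V).eq_zero_or_pos with hn | hn
  · have : IsEmpty V := Fintype.card_eq_zero_iff.1 hn
    simp [Set.eq_empty_of_isEmpty G.edgeSet]
  · exact div_mul_cancel₀ _ (by positivity)

/-- Counting acyclic orientations: if `G` has `n` vertices and average degree
`Γ = 2|E(G)|/n`, then the number of acyclic orientations of `G` is at most `(Γ+1)^n`;
equivalently, a uniformly random orientation (out of the `2^|E(G)|` orientations) is
acyclic with probability at most `((Γ+1)/2^(Γ/2))^n`. -/
theorem stmt6 (V : Type) [Fintype V] (G : SimpleGraph V) (Γ : ℝ)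
    (hΓ : Γ = 2 * G.edgeSet.ncard / Fintype.card V) :
    (Nat.card {D : V → V → Prop // IsOrientationOf D G ∧ DiAcyclic D} : ℝ) ≤
        (Γ + 1) ^ Fintype.card V ∧
    (Nat.card {D : V → V → Prop // IsOrientationOf D G ∧ DiAcyclic D} : ℝ) /
        2 ^ G.edgeSet.ncard ≤ ((Γ + 1) / 2 ^ (Γ / 2)) ^ Fintype.card V := by
  classical
  have hΓn : Γ * Fintype.card V = 2 * G.edgeSet.ncard :=
    hΓ ▸ G.two_mul_ncard_edgeSet_div_card_mul_card
  have hdeg_sum : ∑ v, ((G.degree v : ℝ) + 1) = Fintype.card V * (Γ + 1) := by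
    rw [sum_add_distrib, ← Nat.cast_sum, G.sum_degrees_eq_twice_card_edges, SimpleGraph.edgeFinset,
      ← Set.ncard_eq_toFinset_card', sum_const, card_univ, nsmul_one]
    push_cast
    linarith
  have hcount : (Nat.card {D : V → V → Prop // IsOrientationOf D G ∧ DiAcyclic D} : ℝ) ≤
      (Γ + 1) ^ Fintype.card V :=
    calc _ ≤ ∏ v, ((G.degree v : ℝ) + 1) := by exact_mod_cast card_acyclic_orientations_le_prod G
      _ ≤ (Γ + 1) ^ Fintype.card V :=
        Real.prod_le_pow_card_of_sum_le _ _ _ (fun _ _ => by positivity) hdeg_sum.le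
  have hpow : ((2 : ℝ) ^ (Γ / 2)) ^ Fintype.card V = 2 ^ G.edgeSet.ncard := by
    rw [← Real.rpow_mul_natCast (by norm_num), ← Real.rpow_natCast]
    congr 1
    linarith
  refine ⟨hcount, ?_⟩
  rw [div_pow, hpow]
  gcongr
end

section
/- There exist natural numbers r₀ and k₀ such that the following holds for all integers r ≥ r₀ and k ≥ k₀. Let G = (A ∪ B, E) be a finite bipartite graph with bipartition (A, B) in which every vertex a ∈ A has degree deg(a) ≥ k·(ln k)²·r³·2^(r+2). Let R = {1, …, r²}. Then there exists an assignment L_B giving each vertex b ∈ B an r-element subset L_B(b) of R such that at least half of the vertices of A are saturated, where a vertex a ∈ A is called saturated if for every subset P ⊆ R with |P| = ⌊r²/2⌋, at least (1/2)·k·r² neighbours b of a satisfy L_B(b) ⊆ P. -/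
/-- A vertex `a` is saturated (with respect to the parameters `r`, `k` and the list
assignment `L`) if, for every subset `P` of `{1, …, r²}` of size `⌊r²/2⌋`, at least
`k·r²/2` neighbours `b` of `a` satisfy `L b ⊆ P`. -/
def Saturated {V : Type*} [Fintype V] [DecidableEq V] (G : SimpleGraph V)
    [DecidableRel G.Adj] (r k : ℕ) (L : V → Finset ℕ) (a : V) : Prop :=
  ∀ P ⊆ Finset.Icc 1 (r ^ 2), P.card = r ^ 2 / 2 →
    (k : ℝ) * r ^ 2 / 2 ≤ (((G.neighborFinset a).filter (fun b => L b ⊆ P)).card : ℝ)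

private lemma aux_exp_le (x : ℝ) (h0 : 0 ≤ x) (h1 : x ≤ 1/2) :
    Real.exp (-(2*x)) ≤ 1 - x := by
  have he := Real.add_one_le_exp (2*x)
  have hep : (0:ℝ) < Real.exp (2*x) := Real.exp_pos _
  rw [Real.exp_neg]
  have hinv : (Real.exp (2*x))⁻¹ * Real.exp (2*x) = 1 := inv_mul_cancel₀ (ne_of_gt hep)
  nlinarith [inv_nonneg.2 hep.le, hinv, he, hep]

private lemma aux_one_sub_pow (r : ℕ) (hr : 8 ≤ r) :
    Real.exp (-6) ≤ (1 - 3/(r:ℝ)) ^ r := by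
  have hr0 : (0:ℝ) < r := by positivity
  have hr8 : (8:ℝ) ≤ r := by exact_mod_cast hr
  have hx0 : (0:ℝ) ≤ 3/(r:ℝ) := by positivity
  have hx1 : 3/(r:ℝ) ≤ 1/2 := by
    rw [div_le_div_iff₀ (by positivity) (by norm_num)]; linarith
  have h := aux_exp_le (3/(r:ℝ)) hx0 hx1
  have hrepr : Real.exp (-6) = Real.exp (-(2*(3/(r:ℝ)))) ^ r := by
    rw [← Real.exp_nat_mul]
    congr 1
    field_simp
    ring
  rw [hrepr]
  exact pow_le_pow_left₀ (Real.exp_nonneg _) h r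

private lemma aux_choose {q r : ℕ} (n : ℕ) :
    (q - r)^r * n.choose r ≤ q.choose r * n^r := by
  have h12 : (q - r)^r ≤ q.descFactorial r :=
    le_trans (Nat.pow_le_pow_left (by omega) r) (Nat.pow_sub_le_descFactorial q r)
  have h3 : n.descFactorial r ≤ n^r := Nat.descFactorial_le_pow n r
  have key : r.factorial * ((q - r)^r * n.choose r) ≤ r.factorial * (q.choose r * n^r) := by
    have e1 : r.factorial * ((q - r)^r * n.choose r) = (q-r)^r * n.descFactorial r := by
      rw [Nat.descFactorial_eq_factorial_mul_choose]; ring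
    have e2 : r.factorial * (q.choose r * n^r) = q.descFactorial r * n^r := by
      rw [Nat.descFactorial_eq_factorial_mul_choose]; ring
    rw [e1, e2]; exact Nat.mul_le_mul h12 h3
  exact Nat.le_of_mul_le_mul_left key r.factorial_pos

private lemma aux_choose_le_two_pow (n k : ℕ) : n.choose k ≤ 2^n := by
  rcases le_or_gt k n with h | h
  · calc n.choose k ≤ ∑ i ∈ Finset.range (n+1), n.choose i :=
        Finset.single_le_sum (fun i _ => Nat.zero_le _) (Finset.mem_range.2 (by omega))
      _ = 2^n := Nat.sum_range_choose n
  · simp [Nat.choose_eq_zero_of_lt h]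

private lemma aux_p_bound (r : ℕ) (hr : 8 ≤ r) :
    Real.exp (-6) * (1/2:ℝ)^r ≤ ((r^2/2).choose r : ℝ) / ((r^2).choose r : ℝ) := by
  set q := r^2/2 with hq
  have hrq : r ≤ q := by
    rw [hq, Nat.le_div_iff_mul_le (by norm_num)]
    calc r * 2 ≤ r * r := Nat.mul_le_mul_left r (by omega)
      _ = r^2 := (sq r).symm
  have hqn : q ≤ r^2 := Nat.div_le_self _ _
  have hr0 : (8:ℝ) ≤ (r:ℝ) := by exact_mod_cast hr
  have hc := aux_choose (q := q) (r := r) (r^2)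
  have hchoose_pos : (0:ℝ) < ((r^2).choose r : ℝ) := by
    exact_mod_cast Nat.choose_pos (le_trans hrq hqn)
  have hpow_pos : (0:ℝ) < ((r:ℝ)^2)^r := by positivity
  have key : (((q - r : ℕ)):ℝ)^r / ((r:ℝ)^2)^r ≤ ((q.choose r):ℝ)/(((r^2).choose r):ℝ) := by
    rw [div_le_div_iff₀ hpow_pos hchoose_pos]
    have := hc
    have hcast : (((q - r)^r * (r^2).choose r : ℕ) : ℝ) ≤ ((q.choose r * (r^2)^r : ℕ) : ℝ) := by
      exact_mod_cast this
    push_cast at hcast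
    calc (((q - r : ℕ)):ℝ)^r * ((r^2).choose r : ℝ) ≤ (q.choose r : ℝ) * ((r:ℝ)^2)^r := by
          convert hcast using 2 <;> push_cast <;> ring
      _ = _ := by ring
  have h2q : r^2 ≤ 2*q + 1 := by rw [hq]; omega
  have h2q' : (r:ℝ)^2 ≤ 2*(q:ℝ) + 1 := by exact_mod_cast h2q
  have hcast : (((q - r : ℕ)):ℝ) = (q:ℝ) - r := by
    rw [Nat.cast_sub hrq]
  have hbase : (1 - 3/(r:ℝ))/2 ≤ ((q:ℝ) - r)/((r:ℝ)^2) := by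
    rw [div_le_div_iff₀ (by norm_num) (by positivity)]
    have h3 : 3/(r:ℝ)*(r:ℝ)^2 = 3*(r:ℝ) := by field_simp
    nlinarith [h3, h2q', hr0]
  have hb0 : (0:ℝ) ≤ (1 - 3/(r:ℝ))/2 := by
    have : 3/(r:ℝ) ≤ 1 := by rw [div_le_one (by positivity)]; linarith
    linarith
  have hpow : ((1 - 3/(r:ℝ))/2)^r ≤ (((q:ℝ) - r)/((r:ℝ)^2))^r := pow_le_pow_left₀ hb0 hbase r
  calc Real.exp (-6) * (1/2:ℝ)^r ≤ (1 - 3/(r:ℝ))^r * (1/2:ℝ)^r := by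
        exact mul_le_mul_of_nonneg_right (aux_one_sub_pow r hr) (by positivity)
    _ = ((1 - 3/(r:ℝ))/2)^r := by rw [show (1 - 3/(r:ℝ))/2 = (1 - 3/(r:ℝ)) * (1/2) by ring, mul_pow]
    _ ≤ (((q:ℝ) - r)/((r:ℝ)^2))^r := hpow
    _ = (((q - r : ℕ)):ℝ)^r / ((r:ℝ)^2)^r := by rw [hcast, div_pow]
    _ ≤ _ := key


private lemma aux_chernoff {V : Type} [Fintype V] [DecidableEq V]
    (C : Finset (Finset ℕ)) (N : Finset V) (P : Finset ℕ) (c : ℝ)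
    [DecidablePred fun L : V → Finset ℕ => (((N.filter fun b => L b ⊆ P)).card : ℝ) < c] :
    ((((Fintype.piFinset fun _ : V => C).filter
        fun L => (((N.filter fun b => L b ⊆ P)).card : ℝ) < c)).card : ℝ) ≤
      Real.exp (c * Real.log 2) *
        (((C.card : ℝ) - (((C.filter fun S => S ⊆ P)).card : ℝ) / 2) ^ N.card *
          (C.card : ℝ) ^ (Fintype.card V - N.card)) := by
  classical
  set Ω := Fintype.piFinset fun _ : V => C with hΩ
  set w : V → Finset ℕ → ℝ :=
    fun v S => if v ∈ N then (if S ⊆ P then (1/2 : ℝ) else 1) else 1 with hw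
  have hw_nonneg : ∀ v S, 0 ≤ w v S := by
    intro v S; dsimp only [w]
    split <;> [skip; norm_num]
    split <;> norm_num
  have hprod : ∀ L : V → Finset ℕ,
      (∏ v, w v (L v)) = (1/2 : ℝ) ^ ((N.filter fun b => L b ⊆ P)).card := by
    intro L
    rw [← Finset.prod_subset (Finset.subset_univ N)
      (by intro x _ hx; simp [w, hx])]
    have hc : ∀ v ∈ N, w v (L v) = if L v ⊆ P then (1/2:ℝ) else 1 := by
      intro v hv; simp [w, hv]
    rw [Finset.prod_congr rfl hc, Finset.prod_ite, Finset.prod_const, Finset.prod_const,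
      one_pow, mul_one]
  have hhalf : (1/2:ℝ) = Real.exp (-Real.log 2) := by
    rw [Real.exp_neg, Real.exp_log] <;> norm_num
  have hterm : ∀ L ∈ Ω.filter (fun L => (((N.filter fun b => L b ⊆ P)).card : ℝ) < c),
      (1:ℝ) ≤ Real.exp (c * Real.log 2) * ∏ v, w v (L v) := by
    intro L hL
    rw [Finset.mem_filter] at hL
    rw [hprod L]
    set X := ((N.filter fun b => L b ⊆ P)).card with hX
    have h2 : (1/2:ℝ)^X = Real.exp ((X:ℝ) * (-Real.log 2)) := by
      rw [hhalf, ← Real.exp_nat_mul]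
    rw [h2, ← Real.exp_add]
    have hXc : (X:ℝ) < c := hL.2
    have hlog2 : (0:ℝ) < Real.log 2 := Real.log_pos (by norm_num)
    calc (1:ℝ) = Real.exp 0 := Real.exp_zero.symm
      _ ≤ _ := by
          apply Real.exp_le_exp.2
          nlinarith
  have hsum : ∀ v : V, (∑ S ∈ C, w v S) =
      if v ∈ N then ((C.card:ℝ) - (((C.filter fun S => S ⊆ P)).card:ℝ)/2) else (C.card:ℝ) := by
    intro v
    by_cases hv : v ∈ N
    · simp only [w, if_pos hv]
      rw [Finset.sum_ite, Finset.sum_const, Finset.sum_const]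
      have hcards : ((C.filter fun S => ¬ S ⊆ P)).card = C.card - ((C.filter fun S => S ⊆ P)).card := by
        have := Finset.card_filter_add_card_filter_not (s := C) (p := fun S => S ⊆ P)
        omega
      have hle : ((C.filter fun S => S ⊆ P)).card ≤ C.card := Finset.card_filter_le _ _
      rw [hcards, nsmul_eq_mul, nsmul_eq_mul, Nat.cast_sub hle]
      ring
    · simp [w, hv]
  have e1 : Finset.univ.filter (fun v : V => v ∈ N) = N := by ext v; simp
  have e2 : Finset.univ.filter (fun v : V => ¬ v ∈ N) = Nᶜ := by ext v; simp
  calc ((Ω.filter (fun L => (((N.filter fun b => L b ⊆ P)).card : ℝ) < c)).card : ℝ)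
      = ∑ _L ∈ Ω.filter (fun L => (((N.filter fun b => L b ⊆ P)).card : ℝ) < c), (1:ℝ) := by
        rw [Finset.sum_const, nsmul_eq_mul, mul_one]
    _ ≤ ∑ L ∈ Ω.filter (fun L => (((N.filter fun b => L b ⊆ P)).card : ℝ) < c),
          Real.exp (c * Real.log 2) * ∏ v, w v (L v) := Finset.sum_le_sum hterm
    _ ≤ ∑ L ∈ Ω, Real.exp (c * Real.log 2) * ∏ v, w v (L v) := by
        apply Finset.sum_le_sum_of_subset_of_nonneg (Finset.filter_subset _ _)
        intro L _ _
        exact mul_nonneg (Real.exp_nonneg _) (Finset.prod_nonneg fun v _ => hw_nonneg v (L v))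
    _ = Real.exp (c * Real.log 2) * ∑ L ∈ Ω, ∏ v, w v (L v) := by rw [← Finset.mul_sum]
    _ = Real.exp (c * Real.log 2) * ∏ v, ∑ S ∈ C, w v S := by rw [Finset.prod_univ_sum]
    _ = _ := by
        congr 1
        rw [Finset.prod_congr rfl (fun v _ => hsum v), Finset.prod_ite, Finset.prod_const,
          Finset.prod_const, e1, e2, Finset.card_compl]

set_option maxHeartbeats 1600000 in
private lemma aux_numeric (r k : ℕ) (hr : 8 ≤ r) (hk : 2^30 ≤ k)
    (M m d n : ℕ) (hmM : m ≤ M) (hM : 0 < M) (hdn : d ≤ n)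
    (hp : Real.exp (-6) * (1/2:ℝ)^r ≤ (m:ℝ)/(M:ℝ))
    (hd : (k:ℝ) * Real.log k ^ 2 * (r:ℝ)^3 * 2^(r+2) ≤ (d:ℝ)) :
    (((r^2).choose (r^2/2) : ℝ)) * (Real.exp (((k:ℝ) * (r:ℝ)^2/2) * Real.log 2) *
      (((M:ℝ) - (m:ℝ)/2)^d * (M:ℝ)^(n-d))) ≤ 1/2 * (M:ℝ)^n := by
  have hM' : (0:ℝ) < M := by exact_mod_cast hM
  have hmM' : (m:ℝ) ≤ (M:ℝ) := by exact_mod_cast hmM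
  set p : ℝ := (m:ℝ)/(M:ℝ) with hpdef
  have hp0 : 0 ≤ p := by positivity
  have hp1 : p ≤ 1 := by rw [hpdef, div_le_one hM']; exact hmM'
  -- step 1
  have h1 : ((M:ℝ) - (m:ℝ)/2)^d ≤ (M:ℝ)^d * Real.exp (-(p * d / 2)) := by
    have hbase : (M:ℝ) - (m:ℝ)/2 = M * (1 - p/2) := by
      rw [hpdef]; field_simp
    have hexp : (1:ℝ) - p/2 ≤ Real.exp (-(p/2)) := by
      have := Real.add_one_le_exp (-(p/2)); linarith
    calc ((M:ℝ) - (m:ℝ)/2)^d = ((M:ℝ) * (1 - p/2))^d := by rw [hbase]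
      _ ≤ ((M:ℝ) * Real.exp (-(p/2)))^d := by
          apply pow_le_pow_left₀ (mul_nonneg hM'.le (by linarith))
            (mul_le_mul_of_nonneg_left hexp hM'.le) d
      _ = (M:ℝ)^d * Real.exp (-(p/2))^d := mul_pow _ _ _
      _ = (M:ℝ)^d * Real.exp ((d:ℝ) * -(p/2)) := by rw [Real.exp_nat_mul]
      _ = (M:ℝ)^d * Real.exp (-(p * d / 2)) := by
          rw [show (d:ℝ) * -(p/2) = -(p * d / 2) by ring]
  have hM_pow : (M:ℝ)^d * (M:ℝ)^(n-d) = (M:ℝ)^n := by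
    rw [← pow_add]; congr 1; omega
  have hchoose : (((r^2).choose (r^2/2)):ℝ) ≤ Real.exp ((r:ℝ)^2 * Real.log 2) := by
    have h := aux_choose_le_two_pow (r^2) (r^2/2)
    have h2 : ((2:ℝ))^(r^2) = Real.exp ((r:ℝ)^2 * Real.log 2) := by
      rw [← Real.exp_log (by norm_num : (0:ℝ) < 2), ← Real.exp_nat_mul]
      congr 1
      rw [Real.exp_log (by norm_num : (0:ℝ) < 2)]
      push_cast; ring
    calc (((r^2).choose (r^2/2)):ℝ) ≤ (2:ℝ)^(r^2) := by exact_mod_cast h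
      _ = _ := h2
  -- numeric facts
  have hlog2u : Real.log 2 < 0.6931471808 := Real.log_two_lt_d9
  have hlog2l : 0.6931471803 < Real.log 2 := Real.log_two_gt_d9
  have hr8 : (8:ℝ) ≤ (r:ℝ) := by exact_mod_cast hr
  have hk1 : (2:ℝ)^30 ≤ (k:ℝ) := by exact_mod_cast hk
  have hlogk : 20.7 ≤ Real.log k := by
    have hmono : Real.log ((2:ℝ)^30) ≤ Real.log k := Real.log_le_log (by positivity) hk1
    rw [Real.log_pow] at hmono
    push_cast at hmono
    nlinarith
  have hlogk2 : 404 ≤ Real.log k ^ 2 := by nlinarith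
  have he6 : Real.exp (6:ℝ) ≤ 404 := by
    have h1' : Real.exp 1 ≤ 2.7182818286 := (Real.exp_one_lt_d9).le
    have h6 : Real.exp (6:ℝ) = Real.exp 1 ^ (6:ℕ) := by
      rw [← Real.exp_nat_mul]; norm_num
    rw [h6]
    calc Real.exp 1 ^ (6:ℕ) ≤ (2.7182818286:ℝ)^(6:ℕ) :=
          pow_le_pow_left₀ (Real.exp_nonneg _) h1' 6
      _ ≤ 404 := by norm_num
  have hfac : (1:ℝ) ≤ Real.exp (-6) * Real.log k ^ 2 := by
    rw [Real.exp_neg]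
    rw [le_inv_mul_iff₀ (Real.exp_pos _)]
    rw [mul_one]
    linarith
  -- pd/2 ≥ 2 k r³
  have h2 : (1/2:ℝ)^r * (2:ℝ)^(r+2) = 4 := by
    rw [pow_add, ← mul_assoc, ← mul_pow]; norm_num
  have hpd : 2 * (k:ℝ) * (r:ℝ)^3 ≤ p * d / 2 := by
    have hDpos : (0:ℝ) ≤ (k:ℝ) * Real.log k ^ 2 * (r:ℝ)^3 * 2^(r+2) := by positivity
    have h1' : Real.exp (-6) * (1/2:ℝ)^r * ((k:ℝ) * Real.log k ^2 * (r:ℝ)^3 * 2^(r+2)) ≤ p * (d:ℝ) := by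
      apply mul_le_mul hp hd hDpos hp0
    have heq : Real.exp (-6) * (1/2:ℝ)^r * ((k:ℝ) * Real.log k ^2 * (r:ℝ)^3 * 2^(r+2))
        = (Real.exp (-6) * Real.log k ^2) * ((k:ℝ) * (r:ℝ)^3 * ((1/2:ℝ)^r * (2:ℝ)^(r+2))) := by
      ring
    rw [heq, h2] at h1'
    have hkr : (0:ℝ) ≤ (k:ℝ) * (r:ℝ)^3 * 4 := by positivity
    have h5 : 4*((k:ℝ)*(r:ℝ)^3) ≤ p * d := by
      calc 4*((k:ℝ)*(r:ℝ)^3) = 1*((k:ℝ)*(r:ℝ)^3*4) := by ring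
        _ ≤ (Real.exp (-6) * Real.log k ^2)*((k:ℝ)*(r:ℝ)^3*4) :=
            mul_le_mul_of_nonneg_right hfac hkr
        _ ≤ p * d := h1'
    linarith
  -- main exponent inequality
  have hmain : Real.exp ((r:ℝ)^2 * Real.log 2) *
      (Real.exp (((k:ℝ)*(r:ℝ)^2/2) * Real.log 2) * Real.exp (-(p * d / 2))) ≤ 1/2 := by
    rw [← Real.exp_add, ← Real.exp_add]
    rw [show (1/2:ℝ) = Real.exp (-(Real.log 2)) by
      rw [Real.exp_neg, Real.exp_log] <;> norm_num]
    apply Real.exp_le_exp.2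
    have hfin : Real.log 2 * ((r:ℝ)^2 + (k:ℝ)*(r:ℝ)^2/2 + 1) ≤ 2*(k:ℝ)*(r:ℝ)^3 := by
      have hk0 : (1:ℝ) ≤ (k:ℝ) := by
        calc (1:ℝ) ≤ 2^30 := by norm_num
          _ ≤ (k:ℝ) := hk1
      have hr64 : (64:ℝ) ≤ (r:ℝ)^2 := by nlinarith [hr8]
      have hr2k : (r:ℝ)^2 ≤ (k:ℝ)*(r:ℝ)^2 := by nlinarith [hk0, hr64]
      have h1k : (1:ℝ) ≤ (k:ℝ)*(r:ℝ)^2 := by nlinarith [hk0, hr64]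
      have hsumb : (r:ℝ)^2 + (k:ℝ)*(r:ℝ)^2/2 + 1 ≤ 3*((k:ℝ)*(r:ℝ)^2) := by linarith
      have hS0 : (0:ℝ) ≤ (r:ℝ)^2 + (k:ℝ)*(r:ℝ)^2/2 + 1 := by nlinarith [hr64, h1k]
      have hstep : Real.log 2 * ((r:ℝ)^2 + (k:ℝ)*(r:ℝ)^2/2 + 1) ≤ 0.7*(3*((k:ℝ)*(r:ℝ)^2)) := by
        apply mul_le_mul (by linarith) hsumb hS0 (by norm_num)
      have hlast : (2.1:ℝ)*((k:ℝ)*(r:ℝ)^2) ≤ 2*(k:ℝ)*(r:ℝ)^3 := by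
        have he : 2*(k:ℝ)*(r:ℝ)^3 = ((k:ℝ)*(r:ℝ)^2)*(2*(r:ℝ)) := by ring
        rw [he, mul_comm (2.1:ℝ)]
        have : (2.1:ℝ) ≤ 2*(r:ℝ) := by linarith
        exact mul_le_mul_of_nonneg_left this (by positivity : (0:ℝ) ≤ (k:ℝ)*(r:ℝ)^2)
      linarith
    linarith [hpd, hfin]
  -- assemble
  have hA0 : (0:ℝ) ≤ (M:ℝ) - (m:ℝ)/2 := by linarith
  calc (((r^2).choose (r^2/2) : ℝ)) * (Real.exp (((k:ℝ) * (r:ℝ)^2/2) * Real.log 2) *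
        (((M:ℝ) - (m:ℝ)/2)^d * (M:ℝ)^(n-d)))
      ≤ Real.exp ((r:ℝ)^2*Real.log 2) * (Real.exp (((k:ℝ)*(r:ℝ)^2/2) * Real.log 2) *
        (((M:ℝ)^d * Real.exp (-(p*d/2))) * (M:ℝ)^(n-d))) := by
        apply mul_le_mul hchoose ?_ ?_ (Real.exp_nonneg _)
        · apply mul_le_mul_of_nonneg_left ?_ (Real.exp_nonneg _)
          apply mul_le_mul_of_nonneg_right h1 (by positivity)
        · exact mul_nonneg (Real.exp_nonneg _)
            (mul_nonneg (pow_nonneg hA0 d) (by positivity))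
    _ = (Real.exp ((r:ℝ)^2*Real.log 2) * (Real.exp (((k:ℝ)*(r:ℝ)^2/2) * Real.log 2) *
          Real.exp (-(p*d/2)))) * ((M:ℝ)^d * (M:ℝ)^(n-d)) := by ring
    _ = (Real.exp ((r:ℝ)^2*Real.log 2) * (Real.exp (((k:ℝ)*(r:ℝ)^2/2) * Real.log 2) *
          Real.exp (-(p*d/2)))) * (M:ℝ)^n := by rw [hM_pow]
    _ ≤ 1/2 * (M:ℝ)^n := mul_le_mul_of_nonneg_right hmain (by positivity)

set_option maxHeartbeats 1600000 in
/-- There are `r₀, k₀` such that for all `r ≥ r₀`, `k ≥ k₀`, in every finite bipartite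
graph `G = (A ∪ B, E)` in which every vertex of `A` has degree at least
`k·(ln k)²·r³·2^(r+2)`, there is an assignment `L_B` of `r`-element subsets of
`{1, …, r²}` to the vertices of `B` for which at least half of the vertices of `A`
are saturated. -/
theorem stmt11 :
    ∃ r₀ k₀ : ℕ, ∀ r k : ℕ, r₀ ≤ r → k₀ ≤ k →
      ∀ (V : Type) [Fintype V] [DecidableEq V] (G : SimpleGraph V) [DecidableRel G.Adj]
        (A B : Finset V),
        Disjoint A B → A ∪ B = Finset.univ →
        (∀ u v, G.Adj u v → (u ∈ A ∧ v ∈ B) ∨ (u ∈ B ∧ v ∈ A)) →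
        (∀ a ∈ A, (k : ℝ) * Real.log k ^ 2 * r ^ 3 * 2 ^ (r + 2) ≤ (G.degree a : ℝ)) →
        ∃ L : V → Finset ℕ,
          (∀ b ∈ B, L b ⊆ Finset.Icc 1 (r ^ 2) ∧ (L b).card = r) ∧
          A.card ≤ 2 * {a : V | a ∈ A ∧ Saturated G r k L a}.ncard := by
  classical
  refine ⟨8, 2^30, ?_⟩
  intro r k hr hk V _ _ G _ A B _ _ _ hdeg
  have hrq : r ≤ r^2 := Nat.le_self_pow (by norm_num) r
  set CC := (Finset.Icc 1 (r^2)).powersetCard r with hCC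
  have hRcard : (Finset.Icc 1 (r^2)).card = r^2 := by rw [Nat.card_Icc]; omega
  have hMc : CC.card = (r^2).choose r := by rw [hCC, Finset.card_powersetCard, hRcard]
  have hM : 0 < CC.card := by rw [hMc]; exact Nat.choose_pos hrq
  set q := r^2/2 with hq
  set Ω := Fintype.piFinset (fun _ : V => CC) with hΩ
  have hΩcard : Ω.card = CC.card ^ (Fintype.card V) := by
    rw [hΩ, Fintype.card_piFinset]
    simp [Finset.prod_const, Finset.card_univ]
  have hΩne : Ω.Nonempty := by
    rw [hΩ, Fintype.piFinset_nonempty]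
    intro _; exact Finset.card_pos.1 hM
  set Ps := (Finset.Icc 1 (r^2)).powersetCard q with hPs
  have hPscard : Ps.card = (r^2).choose q := by rw [hPs, Finset.card_powersetCard, hRcard]
  -- per-vertex bound
  have key : ∀ a ∈ A,
      ((Ω.filter (fun L => ¬ Saturated G r k L a)).card : ℝ) ≤ 1/2 * (Ω.card : ℝ) := by
    intro a ha
    set N := G.neighborFinset a with hN
    have hdn : N.card ≤ Fintype.card V := Finset.card_le_univ N
    have hmval : ∀ P ∈ Ps, (CC.filter (fun S => S ⊆ P)).card = q.choose r := by
      intro P hP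
      rw [hPs, Finset.mem_powersetCard] at hP
      have hEq : CC.filter (fun S => S ⊆ P) = P.powersetCard r := by
        ext S
        simp only [hCC, Finset.mem_filter, Finset.mem_powersetCard]
        constructor
        · rintro ⟨⟨-, h2⟩, h3⟩; exact ⟨h3, h2⟩
        · rintro ⟨h1, h2⟩; exact ⟨⟨h1.trans hP.1, h2⟩, h1⟩
      rw [hEq, Finset.card_powersetCard, hP.2]
    have hsub : Ω.filter (fun L => ¬ Saturated G r k L a) ⊆
        Ps.biUnion (fun P => Ω.filter
          (fun L => (((N.filter fun b => L b ⊆ P)).card : ℝ) < (k:ℝ) * (r:ℝ)^2/2)) := by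
      intro L hL
      rw [Finset.mem_filter] at hL
      obtain ⟨hLΩ, hns⟩ := hL
      rw [Saturated] at hns
      push_neg at hns
      obtain ⟨P, hP1, hP2, hP3⟩ := hns
      refine Finset.mem_biUnion.2 ⟨P, ?_, ?_⟩
      · rw [hPs, Finset.mem_powersetCard]; exact ⟨hP1, hP2⟩
      · rw [Finset.mem_filter]; exact ⟨hLΩ, hP3⟩
    have hdeg' : (k:ℝ) * Real.log k ^ 2 * (r:ℝ)^3 * 2^(r+2) ≤ (N.card : ℝ) := by
      have h := hdeg a ha
      rw [← SimpleGraph.card_neighborFinset_eq_degree, ← hN] at h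
      exact_mod_cast h
    have hmle : q.choose r ≤ CC.card := by
      rw [hMc]; exact Nat.choose_le_choose r (Nat.div_le_self _ _)
    have hpb : Real.exp (-6) * (1/2:ℝ)^r ≤ ((q.choose r : ℕ):ℝ)/((CC.card : ℕ):ℝ) := by
      rw [hMc]; exact aux_p_bound r hr
    calc ((Ω.filter (fun L => ¬ Saturated G r k L a)).card : ℝ)
        ≤ ((Ps.biUnion (fun P => Ω.filter
            (fun L => (((N.filter fun b => L b ⊆ P)).card : ℝ) < (k:ℝ) * (r:ℝ)^2/2))).card : ℝ) := by
          exact_mod_cast Finset.card_le_card hsub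
      _ ≤ ((∑ P ∈ Ps, (Ω.filter
            (fun L => (((N.filter fun b => L b ⊆ P)).card : ℝ) < (k:ℝ) * (r:ℝ)^2/2)).card : ℕ) : ℝ) := by
          exact_mod_cast Finset.card_biUnion_le
      _ = ∑ P ∈ Ps, ((Ω.filter
            (fun L => (((N.filter fun b => L b ⊆ P)).card : ℝ) < (k:ℝ) * (r:ℝ)^2/2)).card : ℝ) := by
          push_cast; rfl
      _ ≤ ∑ P ∈ Ps, (Real.exp (((k:ℝ) * (r:ℝ)^2/2) * Real.log 2) *
            ((((CC.card:ℝ) - ((q.choose r : ℕ):ℝ)/2)^N.card) *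
              (CC.card:ℝ)^(Fintype.card V - N.card))) := by
          apply Finset.sum_le_sum
          intro P hP
          have hch := aux_chernoff CC N P ((k:ℝ) * (r:ℝ)^2/2)
          rw [hmval P hP] at hch
          exact hch
      _ = (Ps.card : ℝ) * (Real.exp (((k:ℝ) * (r:ℝ)^2/2) * Real.log 2) *
            ((((CC.card:ℝ) - ((q.choose r : ℕ):ℝ)/2)^N.card) *
              (CC.card:ℝ)^(Fintype.card V - N.card))) := by
          rw [Finset.sum_const, nsmul_eq_mul]
      _ ≤ 1/2 * (Ω.card : ℝ) := by
          rw [hPscard, hΩcard]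
          push_cast [hPscard]
          have := aux_numeric r k hr hk CC.card (q.choose r) N.card (Fintype.card V)
            hmle hM hdn hpb hdeg'
          exact_mod_cast this
  -- double counting
  have hswap : ∑ L ∈ Ω, ((A.filter (fun a => ¬ Saturated G r k L a)).card)
      = ∑ a ∈ A, ((Ω.filter (fun L => ¬ Saturated G r k L a)).card) := by
    simp_rw [Finset.card_filter]
    rw [Finset.sum_comm]
  have hsum : ∑ L ∈ Ω, ((A.filter (fun a => ¬ Saturated G r k L a)).card : ℝ)
      ≤ ∑ L ∈ Ω, (A.card : ℝ)/2 := by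
    have h1 : ∑ L ∈ Ω, ((A.filter (fun a => ¬ Saturated G r k L a)).card : ℝ)
        = ∑ a ∈ A, ((Ω.filter (fun L => ¬ Saturated G r k L a)).card : ℝ) := by
      push_cast
      exact_mod_cast congrArg (Nat.cast : ℕ → ℝ) hswap
    rw [h1]
    calc ∑ a ∈ A, ((Ω.filter (fun L => ¬ Saturated G r k L a)).card : ℝ)
        ≤ ∑ _a ∈ A, 1/2 * (Ω.card:ℝ) := Finset.sum_le_sum key
      _ = (A.card : ℝ) * (1/2 * (Ω.card:ℝ)) := by rw [Finset.sum_const, nsmul_eq_mul]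
      _ = ∑ _L ∈ Ω, (A.card:ℝ)/2 := by rw [Finset.sum_const, nsmul_eq_mul]; ring
  obtain ⟨L, hLΩ, hLle⟩ := Finset.exists_le_of_sum_le hΩne hsum
  refine ⟨L, ?_, ?_⟩
  · intro b _
    have hb := Fintype.mem_piFinset.1 hLΩ b
    rw [hCC, Finset.mem_powersetCard] at hb
    exact hb
  · have hset : {a : V | a ∈ A ∧ Saturated G r k L a}
        = ↑(A.filter (fun a => Saturated G r k L a)) := by
      ext a; simp
    rw [hset, Set.ncard_coe_finset]
    have hsplit := Finset.card_filter_add_card_filter_not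
      (s := A) (p := fun a => Saturated G r k L a)
    have hfin : (A.card : ℝ) ≤ 2 * ((A.filter (fun a => Saturated G r k L a)).card : ℝ) := by
      have hcast : ((A.filter (fun a => Saturated G r k L a)).card : ℝ)
          + ((A.filter (fun a => ¬ Saturated G r k L a)).card : ℝ) = (A.card : ℝ) := by
        exact_mod_cast hsplit
      linarith [hLle]
    exact_mod_cast hfin
end

section
/- Let r ≥ 2 and k ≥ 1 be integers, let R = {1, …, r²}, let G = (A ∪ B, E) be a finite bipartite graph, and let L_B assign to each b ∈ B an r-element subset L_B(b) of R. Suppose a ∈ A is saturated, i.e. for every subset P ⊆ R with |P| = ⌊r²/2⌋, at least (1/2)·k·r² neighbours b of a satisfy L_B(b) ⊆ P. Let β be any colouring of B with β(b) ∈ L_B(b) for all b ∈ B. Call a colour c ∈ R available for a if a has at most k − 1 neighbours b with β(b) = c. Then the number of colours available for a is strictly less than ⌊r²/2⌋ (in particular at most r²/2 − 1). -/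
/-- Let `r ≥ 2`, `k ≥ 1`, let `G = (A ∪ B, E)` be bipartite, let `L_B` assign to each
`b ∈ B` an `r`-element subset of `{1, …, r²}`, let `a ∈ A` be saturated, and let `β`
colour each `b ∈ B` with a colour from `L_B b`. A colour `c` is available for `a` if
at most `k − 1` neighbours `b` of `a` have `β b = c`. Then fewer than `⌊r²/2⌋` colours
are available for `a`. -/
theorem stmt12 (r k : ℕ) (hr : 2 ≤ r) (hk : 1 ≤ k)
    (V : Type) [Fintype V] [DecidableEq V] (G : SimpleGraph V) [DecidableRel G.Adj]
    (A B : Finset V) (hdisj : Disjoint A B) (hcover : A ∪ B = Finset.univ)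
    (hbip : ∀ u v, G.Adj u v → (u ∈ A ∧ v ∈ B) ∨ (u ∈ B ∧ v ∈ A))
    (L : V → Finset ℕ) (hL : ∀ b ∈ B, L b ⊆ Finset.Icc 1 (r ^ 2) ∧ (L b).card = r)
    (a : V) (ha : a ∈ A) (hsat : Saturated G r k L a)
    (β : V → ℕ) (hβ : ∀ b ∈ B, β b ∈ L b) :
    ((Finset.Icc 1 (r ^ 2)).filter
        (fun c => ((G.neighborFinset a).filter (fun b => β b = c)).card ≤ k - 1)).card
      < r ^ 2 / 2 := by
  by_contra hcon
  push_neg at hcon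
  set S := (Finset.Icc 1 (r ^ 2)).filter
      (fun c => ((G.neighborFinset a).filter (fun b => β b = c)).card ≤ k - 1) with hS
  obtain ⟨P, hPS, hPcard⟩ := Finset.exists_subset_card_eq hcon
  have hPIcc : P ⊆ Finset.Icc 1 (r ^ 2) := hPS.trans (Finset.filter_subset _ _)
  have hsatP := hsat P hPIcc hPcard
  -- neighbours of a lie in B
  have hnbB : ∀ b ∈ G.neighborFinset a, b ∈ B := by
    intro b hb
    rw [SimpleGraph.mem_neighborFinset] at hb
    rcases hbip a b hb with ⟨_, h⟩ | ⟨h, _⟩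
    · exact h
    · exact absurd ha (Finset.disjoint_right.mp hdisj h)
  -- the filtered set is covered by the biUnion over colours in P
  have hsub : (G.neighborFinset a).filter (fun b => L b ⊆ P) ⊆
      P.biUnion (fun c => (G.neighborFinset a).filter (fun b => β b = c)) := by
    intro b hb
    rw [Finset.mem_filter] at hb
    refine Finset.mem_biUnion.mpr ⟨β b, hb.2 (hβ b (hnbB b hb.1)), ?_⟩
    exact Finset.mem_filter.mpr ⟨hb.1, rfl⟩
  have hcount : ((G.neighborFinset a).filter (fun b => L b ⊆ P)).card ≤
      P.card * (k - 1) := by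
    calc ((G.neighborFinset a).filter (fun b => L b ⊆ P)).card
        ≤ (P.biUnion (fun c => (G.neighborFinset a).filter (fun b => β b = c))).card :=
          Finset.card_le_card hsub
      _ ≤ ∑ c ∈ P, ((G.neighborFinset a).filter (fun b => β b = c)).card :=
          Finset.card_biUnion_le
      _ ≤ ∑ c ∈ P, (k - 1) := Finset.sum_le_sum (fun c hc => by
          have := Finset.mem_filter.mp (hPS hc)
          exact this.2)
      _ = P.card * (k - 1) := by rw [Finset.sum_const, smul_eq_mul]
  -- numeric contradiction
  have hm2 : 2 ≤ r ^ 2 / 2 := by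
    have : 4 ≤ r ^ 2 := by nlinarith
    omega
  have hmle : ((r ^ 2 / 2 : ℕ) : ℝ) ≤ (r : ℝ) ^ 2 / 2 := by
    have := Nat.cast_div_le (α := ℝ) (m := r ^ 2) (n := 2)
    push_cast at this ⊢
    linarith
  have hcR : (((G.neighborFinset a).filter (fun b => L b ⊆ P)).card : ℝ) ≤
      ((r ^ 2 / 2 : ℕ) : ℝ) * ((k : ℝ) - 1) := by
    have := hcount
    rw [hPcard] at this
    have h2 : (((r ^ 2 / 2) * (k - 1) : ℕ) : ℝ) = ((r ^ 2 / 2 : ℕ) : ℝ) * ((k : ℝ) - 1) := by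
      push_cast [hk]
      ring
    calc (((G.neighborFinset a).filter (fun b => L b ⊆ P)).card : ℝ)
        ≤ (((r ^ 2 / 2) * (k - 1) : ℕ) : ℝ) := by exact_mod_cast this
      _ = _ := h2
  have hm2R : (2 : ℝ) ≤ ((r ^ 2 / 2 : ℕ) : ℝ) := by exact_mod_cast hm2
  have hkR : (1 : ℝ) ≤ (k : ℝ) := by exact_mod_cast hk
  nlinarith [hsatP, hcR, hmle, hm2R]
end
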